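/- Let Λ be a dominant weight, let x ∈ W be Λ-minuscule or Λ-cominuscule, S(x) = {α simple root : ⟨x(Λ), α^∨⟩ ≥ 0}, W_x the subgroup of W generated by {s_α : α ∈ S(x)}, and (W_x)^{Q_x} the set of elements w ∈ W_x of minimal length in their coset modulo the stabilizer of x(Λ) in W_x (equivalently, w(β) > 0 for every positive root β of the root subsystem generated by S(x) with ⟨x(Λ), β^∨⟩ = 0). Then for every w ∈ (W_x)^{Q_x}, the lengths are additive: ℓ(wx) = ℓ(w) + ℓ(x). -/

import Mathlib

namespace KM

/-! ## Jeu de taquin on posets (parametrized by an order relation `r`) -/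

namespace JDT

variable {P : Type}

/-- `S` is a lower set (order ideal) for the relation `r`. -/
def IsIdeal (r : P → P → Prop) (S : Set P) : Prop :=
  ∀ ⦃x y : P⦄, r x y → y ∈ S → x ∈ S

/-- `y` covers `x` for the order relation `r`. -/
def Cov (r : P → P → Prop) (x y : P) : Prop :=
  r x y ∧ x ≠ y ∧ ∀ z : P, r x z → r z y → z = x ∨ z = y

/-- A standard tableau for the order relation `r`: a finite set of boxes, labelled
strictly increasingly (w.r.t. `r`) and bijectively by `{1, …, n}`. -/
structure Tab (r : P → P → Prop) where
  dom : Set P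
  finite : dom.Finite
  lab : P → ℕ
  mono : ∀ ⦃x y : P⦄, x ∈ dom → y ∈ dom → r x y → x ≠ y → lab x < lab y
  bij : Set.BijOn lab dom (Set.Icc 1 dom.ncard)

/-- A configuration occurring during a jeu de taquin slide: a set of labelled boxes,
the labelling, and the position of the vacant box. -/
structure Cfg (P : Type) where
  dom : Set P
  lab : P → ℕ
  hole : P

/-- One elementary move inside a jeu de taquin slide: among the labelled boxes covering
the vacant box, the one with the smallest label moves its label into the vacant box,
becoming itself vacant. -/
def InnerStep (r : P → P → Prop) (s t : Cfg P) : Prop :=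
  t.hole ∈ s.dom ∧ Cov r s.hole t.hole ∧
  (∀ z ∈ s.dom, Cov r s.hole z → s.lab t.hole ≤ s.lab z) ∧
  t.dom = insert s.hole (s.dom \ {t.hole}) ∧
  t.lab s.hole = s.lab t.hole ∧ (∀ z : P, z ≠ s.hole → t.lab z = s.lab z)

/-- No labelled box covers the vacant box: the slide stops. -/
def Terminal (r : P → P → Prop) (s : Cfg P) : Prop :=
  ∀ z ∈ s.dom, ¬ Cov r s.hole z

/-- `x` is a valid vacant box to slide into: it lies strictly below some labelled box,
and is maximal among the unlabelled boxes lying strictly below some labelled box. -/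
def IsSlideBox (r : P → P → Prop) (D : Set P) (x : P) : Prop :=
  x ∉ D ∧ (∃ d ∈ D, r x d ∧ x ≠ d) ∧
  ∀ y : P, y ∉ D → (∃ d ∈ D, r y d ∧ y ≠ d) → r x y → x = y

/-- The jeu de taquin slide `j_x` : relation between the labelled configurations
before and after one full slide. -/
def SlideRel (r : P → P → Prop) (A B : Set P × (P → ℕ)) : Prop :=
  ∃ x : P, IsSlideBox r A.1 x ∧
    ∃ e : Cfg P, Relation.ReflTransGen (InnerStep r) ⟨A.1, A.2, x⟩ e ∧
      Terminal r e ∧ B.1 = e.dom ∧ B.2 = e.lab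

/-- `R` is a rectification of `T`: it is obtained from `T` by iterating jeu de taquin
slides, and its shape is an order ideal. -/
def RectifiesTo (r : P → P → Prop) (T R : Tab r) : Prop :=
  Relation.ReflTransGen (SlideRel r) (T.dom, T.lab) (R.dom, R.lab) ∧ IsIdeal r R.dom

/-- The poset has the jeu de taquin property: the rectification of any standard tableau
is independent of all choices made while performing the slides. -/
def HasJdt (r : P → P → Prop) : Prop :=
  ∀ T R R' : Tab r, RectifiesTo r T R → RectifiesTo r T R' → R.dom = R'.dom ∧ R.lab = R'.lab

open scoped Classical in
/-- The jeu de taquin number `t_{λ,μ}^ν`, relative to a choice `U` of a standard tableau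
of each straight shape: the number of standard tableaux of skew shape `ν/λ` whose
rectification is `U μ`; it is `0` if `λ ⊄ ν`. -/
noncomputable def tP (r : P → P → Prop) (U : Set P → Tab r) (lam mu nu : Set P) : ℕ :=
  if lam ⊆ nu then
    Set.ncard {T : Tab r | T.dom = nu \ lam ∧ RectifiesTo r T (U mu)}
  else 0

end JDT

/-! ## Symmetrizable generalized Cartan matrices and their Weyl groups -/

/-- A symmetrizable generalized Cartan matrix `a i j = ⟨α_j, α_i^∨⟩`, together with a
symmetrizer `d` (so that `(α_i, α_j) = d i * a i j` is a symmetric bilinear form with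
`(α_i, α_i) = 2 * d i`). -/
structure SGCM (I : Type) where
  a : I → I → ℤ
  d : I → ℝ
  a_diag : ∀ i, a i i = 2
  a_offdiag : ∀ i j, i ≠ j → a i j ≤ 0
  a_zero_iff : ∀ i j, a i j = 0 → a j i = 0
  d_pos : ∀ i, 0 < d i
  symm : ∀ i j, d i * (a i j : ℝ) = d j * (a j i : ℝ)

variable {I : Type}

/-- The squared length `(α_i, α_i)` of the `i`-th simple root. -/
def SGCM.normSq (G : SGCM I) (i : I) : ℝ := 2 * G.d i

/-- The dual (transposed) generalized Cartan matrix, corresponding to exchanging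
roots and coroots. -/
noncomputable def SGCM.dual (G : SGCM I) : SGCM I where
  a i j := G.a j i
  d i := (G.d i)⁻¹
  a_diag i := G.a_diag i
  a_offdiag i j h := G.a_offdiag j i (Ne.symm h)
  a_zero_iff i j h := G.a_zero_iff j i h
  d_pos i := inv_pos.mpr (G.d_pos i)
  symm i j := by
    have h := G.symm j i
    have hi : G.d i ≠ 0 := ne_of_gt (G.d_pos i)
    have hj : G.d j ≠ 0 := ne_of_gt (G.d_pos j)
    rw [inv_mul_eq_div, inv_mul_eq_div, div_eq_div_iff hi hj]
    linear_combination h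

/-- The simple reflection `s_i` acting on weight coordinates: a weight `λ` is recorded
by its pairings `λ j = ⟨λ, α_j^∨⟩` with the simple coroots, and
`⟨s_i λ, α_j^∨⟩ = ⟨λ, α_j^∨⟩ - ⟨λ, α_i^∨⟩ ⟨α_i, α_j^∨⟩`. -/
def SGCM.srefl (G : SGCM I) (i : I) : Equiv.Perm (I → ℝ) :=
  Function.Involutive.toPerm (fun lam j => lam j - lam i * (G.a j i : ℝ)) (by
    intro lam
    funext j
    have h2 : ((G.a i i : ℤ) : ℝ) = 2 := by rw [G.a_diag i]; norm_num
    dsimp only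
    rw [h2]
    ring)

/-- The product `s_{l 1} ⋯ s_{l n}` of the simple reflections along a word. -/
def SGCM.wordProd (G : SGCM I) (l : List I) : Equiv.Perm (I → ℝ) :=
  (l.map G.srefl).prod

/-- The length of an element of the Weyl group: the minimal length of a word of simple
reflections expressing it. -/
noncomputable def SGCM.length (G : SGCM I) (w : Equiv.Perm (I → ℝ)) : ℕ :=
  sInf {n | ∃ l : List I, l.length = n ∧ G.wordProd l = w}

/-- A word is reduced if no shorter word has the same product. -/
def SGCM.IsReduced (G : SGCM I) (l : List I) : Prop :=
  G.length (G.wordProd l) = l.length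

/-- `w` belongs to the Weyl group (is a product of simple reflections). -/
def SGCM.InW (G : SGCM I) (w : Equiv.Perm (I → ℝ)) : Prop :=
  ∃ l : List I, G.wordProd l = w

/-- The (strong) Bruhat order on the Weyl group, via the subword property. -/
def SGCM.bruhatLE (G : SGCM I) (u w : Equiv.Perm (I → ℝ)) : Prop :=
  ∃ l : List I, G.IsReduced l ∧ G.wordProd l = w ∧
    ∃ l' : List I, l'.Sublist l ∧ G.wordProd l' = u

/-- Peterson's condition: the word `[β_1, …, β_l]` satisfies
`s_{β_k} s_{β_{k+1}} ⋯ s_{β_l} (Λ) = s_{β_{k+1}} ⋯ s_{β_l} (Λ) - β_k`, i.e.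
`⟨s_{β_{k+1}} ⋯ s_{β_l} (Λ), β_k^∨⟩ = 1`, for every `k`. -/
def SGCM.MinusculeWord (G : SGCM I) (Λ : I → ℝ) : List I → Prop
  | [] => True
  | j :: l => G.MinusculeWord Λ l ∧ G.wordProd l Λ j = 1

/-- `w` is `Λ`-minuscule. -/
def SGCM.IsMinuscule (G : SGCM I) (Λ : I → ℝ) (w : Equiv.Perm (I → ℝ)) : Prop :=
  ∃ l : List I, G.IsReduced l ∧ G.wordProd l = w ∧ G.MinusculeWord Λ l

/-- `w` is `Λ`-cominuscule: it is `Λ^∨`-minuscule for the dual root system (where the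
coweight `Λ^∨ = Σ Λ_i ϖ_i^∨` has the same coordinate function as `Λ`). -/
def SGCM.IsCominuscule (G : SGCM I) (Λ : I → ℝ) (w : Equiv.Perm (I → ℝ)) : Prop :=
  ∃ l : List I, G.IsReduced l ∧ G.wordProd l = w ∧ G.dual.MinusculeWord Λ l

/-- `w` is `Λ`-minuscule or `Λ`-cominuscule. -/
def SGCM.IsCoMin (G : SGCM I) (Λ : I → ℝ) (w : Equiv.Perm (I → ℝ)) : Prop :=
  G.IsMinuscule Λ w ∨ G.IsCominuscule Λ w

/-- The simple reflection `s_i` acting on the root lattice `⊕ ℤ α_j` (an element is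
recorded by its coordinates on the simple roots):
`s_i (x) = x - ⟨x, α_i^∨⟩ α_i` with `⟨Σ c_j α_j, α_i^∨⟩ = Σ c_j * a i j`. -/
noncomputable def SGCM.qrefl (G : SGCM I) (i : I) : Equiv.Perm (I →₀ ℤ) :=
  Function.Involutive.toPerm
    (fun x => x - Finsupp.single i (x.sum fun j c => c * G.a i j))
    (by
      intro x
      dsimp only
      have hsub : ∀ y z : I →₀ ℤ,
          ((y - z).sum fun j c => c * G.a i j)
            = (y.sum fun j c => c * G.a i j) - (z.sum fun j c => c * G.a i j) :=
        fun y z => Finsupp.sum_sub_index (fun a b₁ b₂ => by ring)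
      have hsingle : ∀ c : ℤ,
          ((Finsupp.single i c).sum fun j c' => c' * G.a i j) = c * 2 := by
        intro c
        rw [Finsupp.sum_single_index (by ring), G.a_diag i]
      rw [hsub, hsingle]
      have h : (x.sum fun j c => c * G.a i j) - (x.sum fun j c => c * G.a i j) * 2
          = -(x.sum fun j c => c * G.a i j) := by ring
      rw [h, Finsupp.single_neg]
      abel)

/-- The product of the simple reflections along a word, acting on the root lattice. -/
noncomputable def SGCM.qword (G : SGCM I) (l : List I) : Equiv.Perm (I →₀ ℤ) :=
  (l.map G.qrefl).prod

/-! ## Heaps of fully commutative elements -/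

/-- Generating relation for the heap order on the positions of a word: position `p` is
below position `q` when `p` comes later in the word and the corresponding simple
reflections do not commute. -/
def heapBelow (G : SGCM I) (l : List I) (p q : Fin l.length) : Prop :=
  q.1 < p.1 ∧ G.srefl (l.get p) * G.srefl (l.get q) ≠ G.srefl (l.get q) * G.srefl (l.get p)

/-- The heap order on the positions of a word. -/
def heapLE (G : SGCM I) (l : List I) : Fin l.length → Fin l.length → Prop :=
  Relation.ReflTransGen (heapBelow G l)

/-- The subword of `l` consisting of the positions in `S`, in the order of the word. -/
noncomputable def idealWord (l : List I) (S : Set (Fin l.length)) : List I :=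
  ((List.finRange l.length).filter fun p => @decide (p ∈ S) (Classical.propDecidable _)).map
    l.get

open scoped Classical in
/-- The number `m(w)` attached to a `Λ`-(co)minuscule element with reduced word `l`:
the product of `(α, α) / (α_p, α_p)` over all pairs `(p, α)` where `p` is a position of
the word, `α` is a simple root with `⟨Λ, α^∨⟩ > 0` and `(α, α) > (α_p, α_p)`, and `p`
lies above the minimal `α`-coloured element `(α, 1)` of the heap (here `q` runs over the
positions and the first condition states that `q = (α, 1)` for `α` the colour of `q`). -/
noncomputable def mNum (G : SGCM I) (Λ : I → ℝ) (l : List I) : ℝ :=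
  ∏ pq : Fin l.length × Fin l.length,
    if (∀ r, l.get r = l.get pq.2 → heapLE G l pq.2 r) ∧
        0 < Λ (l.get pq.2) ∧
        G.normSq (l.get pq.1) < G.normSq (l.get pq.2) ∧
        heapLE G l pq.2 pq.1
    then G.normSq (l.get pq.2) / G.normSq (l.get pq.1)
    else 1

/-! ## Jeu de taquin numbers for (co)minuscule elements -/

/-- A valid system of choices for computing jeu de taquin numbers of `Λ`-(co)minuscule
elements: `wrd w` is a reduced word for `w`; for `u ≤ w`, `idl w u` is the order ideal
of the heap of `w` corresponding to `u`, and `tab w u` is a standard tableau whose shape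
is that ideal. -/
def ValidChoices (G : SGCM I) (Λ : I → ℝ)
    (wrd : Equiv.Perm (I → ℝ) → List I)
    (idl : (w u : Equiv.Perm (I → ℝ)) → Set (Fin (wrd w).length))
    (tab : (w u : Equiv.Perm (I → ℝ)) → JDT.Tab (heapLE G (wrd w))) : Prop :=
  (∀ w, G.IsCoMin Λ w → G.IsReduced (wrd w) ∧ G.wordProd (wrd w) = w) ∧
  (∀ w u, G.IsCoMin Λ w → G.bruhatLE u w →
      JDT.IsIdeal (heapLE G (wrd w)) (idl w u) ∧
      G.wordProd (idealWord (wrd w) (idl w u)) = u) ∧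
  (∀ w u, G.IsCoMin Λ w → G.bruhatLE u w → (tab w u).dom = idl w u)

open scoped Classical in
/-- The jeu de taquin number `t_{u,v}^w` of three Weyl group elements, computed in the
heap of `w`: the number of standard tableaux of shape `H(w)/λ(u)` rectifying to the
chosen standard tableau of shape `λ(v)`; it is `0` unless `u ≤ w` and `v ≤ w`. -/
noncomputable def tE (G : SGCM I)
    (wrd : Equiv.Perm (I → ℝ) → List I)
    (idl : (w u : Equiv.Perm (I → ℝ)) → Set (Fin (wrd w).length))
    (tab : (w u : Equiv.Perm (I → ℝ)) → JDT.Tab (heapLE G (wrd w)))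
    (u v w : Equiv.Perm (I → ℝ)) : ℕ :=
  if G.bruhatLE u w ∧ G.bruhatLE v w then
    Set.ncard {T : JDT.Tab (heapLE G (wrd w)) |
      T.dom = Set.univ \ idl w u ∧ JDT.RectifiesTo (heapLE G (wrd w)) T (tab w v)}
  else 0

/-- The number `m_{u,v}^w = m(w) / (m(u) · m(v))`. -/
noncomputable def mQuot (G : SGCM I) (Λ : I → ℝ)
    (wrd : Equiv.Perm (I → ℝ) → List I)
    (u v w : Equiv.Perm (I → ℝ)) : ℝ :=
  mNum G Λ (wrd w) / (mNum G Λ (wrd u) * mNum G Λ (wrd v))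

/-- The set `S(x)` of simple roots `α` such that `⟨x(Λ), α^∨⟩ ≥ 0`. -/
def Sx (G : SGCM I) (Λ : I → ℝ) (x : Equiv.Perm (I → ℝ)) : Set I :=
  {α : I | 0 ≤ x Λ α}

/-- The restriction of a symmetrizable GCM to a subset of the index set. -/
def SGCM.restrict (G : SGCM I) (S : Set I) : SGCM ↥S where
  a i j := G.a i.1 j.1
  d i := G.d i.1
  a_diag i := G.a_diag i.1
  a_offdiag i j h := G.a_offdiag i.1 j.1 (fun hv => h (Subtype.ext hv))
  a_zero_iff i j h := G.a_zero_iff i.1 j.1 h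
  d_pos i := G.d_pos i.1
  symm i j := G.symm i.1 j.1

end KM

/-!
The coroot lattice of `G` is the root lattice of `G.dual`, on which `W` acts compatibly with the
pairing against weights. Tits' reduction to rank two shows that `w α_t^∨` is a nonnegative or a
nonpositive combination of simple coroots according as `ℓ(w s_t) > ℓ(w)` or not.

Take a reduced word for `w` with letters in `S(x)` and a reduced word for `x`, and suppose that
appending the letter `j` of `x` after its prefix `y` is the first step at which `w y s_j` stops
being reduced. Then `γ = y α_j^∨` is positive while `w γ` is negative, and `⟨x Λ, γ⟩ = 0`: it is
`≤ 0` because `x⁻¹ γ` is negative and `Λ` is dominant, and `≥ 0` because `w`, a product of simple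
reflections in `S(x)`, only changes the coordinates of `γ` along `S(x)`. So the reflection
`q = y s_j y⁻¹` fixes `x Λ`. Following the sign change of `γ` along the word for `w` shows that
`q` is the conjugate of a letter of `w` by the suffix after it, so `q ∈ W_x` and `w q` is `w` with
that letter deleted, contradicting the minimality of `w`.
-/

namespace KM

open Finsupp

variable {I : Type}

lemma linearCombination_pi_single [DecidableEq I] (j : I) (c : I →₀ ℤ) :
    linearCombination ℤ (Pi.single j (1 : ℝ)) c = c j := by
  induction c using Finsupp.induction_linear with
  | zero => simp
  | add c c' hc hc' => simp only [map_add, hc, hc', Finsupp.add_apply, Int.cast_add]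
  | single k n => by_cases h : k = j <;> simp [h]

lemma linearCombination_nonneg {μ : I → ℝ} {c : I →₀ ℤ} (hc : 0 ≤ c)
    (hμ : ∀ s, c s ≠ 0 → 0 ≤ μ s) : 0 ≤ linearCombination ℤ μ c := by
  rw [linearCombination_apply]
  refine Finset.sum_nonneg fun s hs => ?_
  exact zsmul_nonneg (hμ s (mem_support_iff.mp hs)) (le_def.mp hc s)

/-- For `(b, c) = (a i j, a j i)`, the coordinates on `α_i^∨, α_j^∨` of `(⋯ s_i s_j) α_i^∨`, the
alternating word having length `k` (see `SGCM.dual_qword_altWord_single`). -/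
def dihedralCoeff (b c : ℤ) : ℕ → ℤ × ℤ
  | 0 => (1, 0)
  | k + 1 =>
    let v := dihedralCoeff b c k
    if Even k then (v.1, -v.2 - b * v.1) else (-v.1 - c * v.2, v.2)

lemma dihedralCoeff_nonneg_of_four_le {b c : ℤ} (hb : b ≤ 0) (hc : c ≤ 0) (h : 4 ≤ b * c)
    (k : ℕ) : 0 ≤ (dihedralCoeff b c k).1 ∧ 0 ≤ (dihedralCoeff b c k).2 := by
  suffices ∀ k, 0 ≤ (dihedralCoeff b c k).1 ∧ 0 ≤ (dihedralCoeff b c k).2 ∧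
      (Even k → 2 * (dihedralCoeff b c k).2 ≤ -b * (dihedralCoeff b c k).1) ∧
      (¬ Even k → 2 * (dihedralCoeff b c k).1 ≤ -c * (dihedralCoeff b c k).2) from
    ⟨(this k).1, (this k).2.1⟩
  intro k
  induction k with
  | zero => exact ⟨zero_le_one, le_rfl, fun _ => by simpa [dihedralCoeff] using hb,
    fun h => (h Even.zero).elim⟩
  | succ k ih =>
    obtain ⟨hp, hq, heven, hodd⟩ := ih
    by_cases hk : Even k
    · have := heven hk
      simp only [dihedralCoeff, hk, if_true, Nat.even_add_one, not_true_eq_false, false_imp_iff,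
        not_false_eq_true, true_implies, true_and]
      refine ⟨hp, by linarith, ?_⟩
      nlinarith
    · have := hodd hk
      simp only [dihedralCoeff, hk, if_false, Nat.even_add_one, not_false_eq_true, true_implies,
        not_true_eq_false, false_imp_iff, and_true]
      refine ⟨by linarith, hq, ?_⟩
      nlinarith

/-- The finite rank-two types `b * c ∈ {0, 1, 2, 3}`, where `s_i s_j` has order `M = 2, 3, 4, 6`. -/
lemma exists_dihedralCoeff_braid {b c : ℤ} (hb : b ≤ 0) (hc : c ≤ 0) (hbc : b = 0 ↔ c = 0)
    (h : b * c < 4) : ∃ M, 0 < M ∧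
      (∀ k < M, 0 ≤ (dihedralCoeff b c k).1 ∧ 0 ≤ (dihedralCoeff b c k).2) ∧
      dihedralCoeff b c (M - 1) = if Even (M - 1) then (0, 1) else (1, 0) := by
  have hbounds : -3 ≤ b ∧ -3 ≤ c := by
    rcases hc.lt_or_eq with hc | rfl
    · have : b ≠ 0 := fun h0 => hc.ne (hbc.mp h0)
      constructor <;> nlinarith [lt_of_le_of_ne hb this]
    · simp [hbc.mpr rfl]
  obtain ⟨hb', hc'⟩ := hbounds
  interval_cases b <;> interval_cases c <;> simp at hbc h <;>
    first | exact ⟨2, by decide⟩ | exact ⟨3, by decide⟩ | exact ⟨4, by decide⟩ |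
      exact ⟨6, by decide⟩

def altWord (u v : I) : ℕ → List I
  | 0 => []
  | k + 1 => (if Even k then u else v) :: altWord u v k

@[simp] lemma length_altWord (u v : I) (k : ℕ) : (altWord u v k).length = k := by
  induction k with
  | zero => rfl
  | succ k ih => simp [altWord, ih]

lemma altWord_succ_eq_append (u v : I) (k : ℕ) : altWord u v (k + 1) = altWord v u k ++ [u] := by
  induction k with
  | zero => rfl
  | succ k ih =>
    rw [altWord, ih, altWord]
    by_cases hk : Even k <;> simp [hk, Nat.even_add_one]

lemma altWord_isSuffix (u v : I) {M k : ℕ} (h : M ≤ k) : altWord u v M <:+ altWord u v k := by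
  induction k, h using Nat.le_induction with
  | base => exact List.suffix_refl _
  | succ k _ ih => exact ih.trans (List.suffix_cons _ _)

namespace SGCM

section Words

variable (G : SGCM I)

@[simp] lemma srefl_apply (i : I) (μ : I → ℝ) (j : I) :
    G.srefl i μ j = μ j - μ i * G.a j i := rfl

@[simp] lemma srefl_inv (i : I) : (G.srefl i)⁻¹ = G.srefl i :=
  Function.Involutive.toPerm_symm _

@[simp] lemma srefl_mul_self (i : I) : G.srefl i * G.srefl i = 1 := by
  simpa using inv_mul_cancel (G.srefl i)

@[simp] lemma srefl_mul_srefl_mul (i : I) (w : Equiv.Perm (I → ℝ)) :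
    G.srefl i * (G.srefl i * w) = w := by
  rw [← mul_assoc, srefl_mul_self, one_mul]

@[simp] lemma wordProd_nil : G.wordProd [] = 1 := rfl

@[simp] lemma wordProd_cons (i : I) (l : List I) :
    G.wordProd (i :: l) = G.srefl i * G.wordProd l := by
  simp [wordProd]

lemma wordProd_singleton (i : I) : G.wordProd [i] = G.srefl i := by
  simp

@[simp] lemma wordProd_append (l m : List I) :
    G.wordProd (l ++ m) = G.wordProd l * G.wordProd m := by
  simp [wordProd]

@[simp] lemma wordProd_reverse (l : List I) : G.wordProd l.reverse = (G.wordProd l)⁻¹ := by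
  induction l with
  | nil => simp
  | cons i l ih => simp [ih]

lemma wordProd_mem_closure {S : Set (Equiv.Perm (I → ℝ))} {l : List I}
    (h : ∀ i ∈ l, G.srefl i ∈ S) : G.wordProd l ∈ Subgroup.closure S := by
  induction l with
  | nil => exact one_mem _
  | cons i l ih =>
    rw [List.forall_mem_cons] at h
    exact mul_mem (Subgroup.subset_closure h.1) (ih h.2)

lemma wordProd_add (l : List I) (μ ν : I → ℝ) :
    G.wordProd l (μ + ν) = G.wordProd l μ + G.wordProd l ν := by
  induction l with
  | nil => rfl
  | cons i l ih =>
    ext j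
    simp only [wordProd_cons, Equiv.Perm.mul_apply, ih, srefl_apply, Pi.add_apply]
    ring

lemma wordProd_smul (l : List I) (r : ℝ) (μ : I → ℝ) :
    G.wordProd l (r • μ) = r • G.wordProd l μ := by
  induction l with
  | nil => rfl
  | cons i l ih =>
    ext j
    simp only [wordProd_cons, Equiv.Perm.mul_apply, ih, srefl_apply, Pi.smul_apply, smul_eq_mul]
    ring

end Words

section RootLattice

variable (H : SGCM I)

lemma qrefl_apply (i : I) (c : I →₀ ℤ) :
    H.qrefl i c = c - single i (linearCombination ℤ (H.a i) c) := by
  rw [linearCombination_apply]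
  rfl

@[simp] lemma qrefl_inv (i : I) : (H.qrefl i)⁻¹ = H.qrefl i :=
  Function.Involutive.toPerm_symm _

@[simp] lemma qrefl_qrefl (i : I) (c : I →₀ ℤ) : H.qrefl i (H.qrefl i c) = c :=
  Function.Involutive.toPerm_involutive _ c

@[simp] lemma qword_nil : H.qword [] = 1 := rfl

@[simp] lemma qword_cons (i : I) (l : List I) :
    H.qword (i :: l) = H.qrefl i * H.qword l := by
  simp [qword]

@[simp] lemma qword_append (l m : List I) :
    H.qword (l ++ m) = H.qword l * H.qword m := by
  simp [qword]

@[simp] lemma qword_reverse (l : List I) : H.qword l.reverse = (H.qword l)⁻¹ := by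
  induction l with
  | nil => simp
  | cons i l ih => simp [ih]

lemma qrefl_single_self (i : I) : H.qrefl i (single i 1) = -single i 1 := by
  rw [qrefl_apply, linearCombination_single, H.a_diag, ← single_neg, ← single_sub]
  norm_num

lemma qrefl_apply_of_ne {i j : I} (h : j ≠ i) (c : I →₀ ℤ) : H.qrefl i c j = c j := by
  simp [qrefl_apply, single_eq_of_ne h]

lemma qword_apply_of_notMem {l : List I} {j : I} (h : j ∉ l) (c : I →₀ ℤ) :
    H.qword l c j = c j := by
  induction l with
  | nil => rfl
  | cons i l ih =>
    rw [List.mem_cons, not_or] at h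
    rw [qword_cons, Equiv.Perm.mul_apply, qrefl_apply_of_ne H h.1, ih h.2]

lemma qword_add (l : List I) (c c' : I →₀ ℤ) :
    H.qword l (c + c') = H.qword l c + H.qword l c' := by
  induction l with
  | nil => rfl
  | cons i l ih =>
    simp only [qword_cons, Equiv.Perm.mul_apply, ih, qrefl_apply, map_add, single_add]
    abel

lemma qword_zsmul (l : List I) (n : ℤ) (c : I →₀ ℤ) : H.qword l (n • c) = n • H.qword l c :=
  map_zsmul (AddMonoidHom.mk' _ (H.qword_add l)) n c

lemma qword_neg (l : List I) (c : I →₀ ℤ) : H.qword l (-c) = -H.qword l c :=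
  map_neg (AddMonoidHom.mk' _ (H.qword_add l)) c

lemma qword_zero (l : List I) : H.qword l 0 = 0 :=
  map_zero (AddMonoidHom.mk' _ (H.qword_add l))

lemma qword_single_ne_zero (l : List I) (i : I) : H.qword l (single i 1) ≠ 0 := by
  rw [← H.qword_zero l, (H.qword l).injective.ne_iff]
  exact single_ne_zero.mpr one_ne_zero

lemma eq_single_of_nonneg_of_qrefl_nonpos {c : I →₀ ℤ} {i : I} (hc : 0 ≤ c)
    (hic : H.qrefl i c ≤ 0) : c = single i (c i) := by
  ext s
  rcases eq_or_ne s i with rfl | hs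
  · simp
  · have h₁ := le_def.mp hic s
    rw [qrefl_apply_of_ne H hs] at h₁
    rw [single_eq_of_ne hs]
    exact le_antisymm h₁ (le_def.mp hc s)

lemma eq_one_of_qword_single_eq_single {l : List I} {t i : I} {p : ℤ} (hp : 0 ≤ p)
    (h : H.qword l (single t 1) = single i p) : p = 1 := by
  have h₁ : single t 1 = H.qword l.reverse (single i p) := by
    rw [← h, qword_reverse, Equiv.Perm.coe_inv, Equiv.symm_apply_apply]
  rw [← smul_single_one i p, qword_zsmul] at h₁
  have h₂ := congrArg (· t) h₁
  simp only [single_eq_same, coe_smul, Pi.smul_apply, smul_eq_mul] at h₂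
  exact Int.eq_one_of_mul_eq_one_right hp h₂.symm

end RootLattice

variable (G : SGCM I)

section Pairing

@[simp] lemma dual_a (i j : I) : G.dual.a i j = G.a j i := rfl

/-- The simple root `α_i` in the coordinates of weights: `⟨α_i, α_j^∨⟩ = a j i`. -/
def simpleRoot (i : I) : I → ℝ := fun j => G.a j i

lemma srefl_eq (i : I) (μ : I → ℝ) : G.srefl i μ = μ - μ i • G.simpleRoot i := by
  ext j
  simp [simpleRoot]

lemma linearCombination_simpleRoot (i : I) (c : I →₀ ℤ) :
    linearCombination ℤ (G.simpleRoot i) c = (linearCombination ℤ (G.dual.a i) c : ℤ) := by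
  simp [linearCombination_apply, Finsupp.sum, simpleRoot]

lemma linearCombination_srefl_qrefl (i : I) (μ : I → ℝ) (c : I →₀ ℤ) :
    linearCombination ℤ (G.srefl i μ) (G.dual.qrefl i c) = linearCombination ℤ μ c := by
  have h : linearCombination ℤ (μ - μ i • G.simpleRoot i) c
      = linearCombination ℤ μ c - μ i * linearCombination ℤ (G.simpleRoot i) c := by
    simp only [linearCombination_apply, Finsupp.sum, Finset.mul_sum, ← Finset.sum_sub_distrib]
    refine Finset.sum_congr rfl fun j _ => ?_
    simp only [Pi.sub_apply, Pi.smul_apply, smul_eq_mul, zsmul_eq_mul]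
    ring
  rw [srefl_eq, qrefl_apply, map_sub, linearCombination_single, h, linearCombination_simpleRoot]
  simp only [Pi.sub_apply, Pi.smul_apply, simpleRoot, G.a_diag, Int.cast_ofNat, smul_eq_mul,
    zsmul_eq_mul]
  ring

lemma linearCombination_wordProd_qword (l : List I) (μ : I → ℝ) (c : I →₀ ℤ) :
    linearCombination ℤ (G.wordProd l μ) (G.dual.qword l c) = linearCombination ℤ μ c := by
  induction l generalizing μ c with
  | nil => rfl
  | cons i l ih =>
    simp only [wordProd_cons, qword_cons, Equiv.Perm.mul_apply, linearCombination_srefl_qrefl, ih]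

lemma dual_qword_eq_of_wordProd_eq {l m : List I} (h : G.wordProd l = G.wordProd m) :
    G.dual.qword l = G.dual.qword m := by
  classical
  ext c j
  have key (l : List I) : (G.dual.qword l c j : ℝ)
      = linearCombination ℤ ((G.wordProd l)⁻¹ (Pi.single j 1)) c := by
    rw [← linearCombination_wordProd_qword G l, Equiv.Perm.coe_inv, Equiv.apply_symm_apply,
      linearCombination_pi_single]
  exact_mod_cast (key l).trans (h ▸ (key m).symm)

/-- `α_i^∨ ↦ (d i)⁻¹ α_i`: coroots as weights, through the invariant form
`(α_i, α_j) = d i * a i j`. -/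
noncomputable def corootToWeight : (I →₀ ℤ) →ₗ[ℤ] I → ℝ :=
  linearCombination ℤ fun i => (G.d i)⁻¹ • G.simpleRoot i

lemma corootToWeight_single (i : I) :
    G.corootToWeight (single i 1) = (G.d i)⁻¹ • G.simpleRoot i := by
  simp [corootToWeight]

lemma corootToWeight_apply_self (c : I →₀ ℤ) (i : I) :
    G.corootToWeight c i = (G.d i)⁻¹ * linearCombination ℤ (G.dual.a i) c := by
  simp only [corootToWeight, linearCombination_apply, Finsupp.sum, Finset.sum_apply,
    Int.cast_sum, Finset.mul_sum]
  refine Finset.sum_congr rfl fun j _ => ?_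
  have hsymm := G.symm i j
  have := G.d_pos i
  have := G.d_pos j
  simp only [Pi.smul_apply, smul_eq_mul, zsmul_eq_mul, simpleRoot, dual_a, Int.cast_mul]
  field_simp
  linear_combination (c j : ℝ) * hsymm

lemma srefl_corootToWeight (i : I) (c : I →₀ ℤ) :
    G.srefl i (G.corootToWeight c) = G.corootToWeight (G.dual.qrefl i c) := by
  rw [srefl_eq, corootToWeight_apply_self, qrefl_apply, map_sub, ← smul_single_one, map_zsmul,
    corootToWeight_single]
  ext j
  simp only [Pi.sub_apply, Pi.smul_apply, smul_eq_mul, zsmul_eq_mul, Algebra.mul_smul_comm,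
    Pi.mul_apply, Pi.intCast_apply, sub_right_inj]
  ring


lemma wordProd_corootToWeight (l : List I) (c : I →₀ ℤ) :
    G.wordProd l (G.corootToWeight c) = G.corootToWeight (G.dual.qword l c) := by
  induction l generalizing c with
  | nil => rfl
  | cons i l ih =>
    simp only [wordProd_cons, qword_cons, Equiv.Perm.mul_apply, ih, srefl_corootToWeight]

lemma linearCombination_corootToWeight_single (i : I) :
    linearCombination ℤ (G.corootToWeight (single i 1)) (single i 1) = 2 * (G.d i)⁻¹ := by
  rw [linearCombination_single, one_smul, corootToWeight_apply_self, linearCombination_single,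
    one_smul, dual_a, G.a_diag]
  push_cast
  ring

end Pairing

section Conjugation

variable {G} {l : List I} {i j : I} (h : G.dual.qword l (single i 1) = single j 1)
include h

lemma d_eq_of_dual_qword_single : G.d i = G.d j := by
  have key := G.linearCombination_wordProd_qword l (G.corootToWeight (single i 1)) (single i 1)
  rw [wordProd_corootToWeight, h, linearCombination_corootToWeight_single,
    linearCombination_corootToWeight_single] at key
  have := G.d_pos i
  have := G.d_pos j
  field_simp at key
  linarith

lemma wordProd_simpleRoot_of_dual_qword_single :
    G.wordProd l (G.simpleRoot i) = G.simpleRoot j := by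
  have hroot (k : I) : G.simpleRoot k = G.d k • G.corootToWeight (single k 1) := by
    rw [corootToWeight_single, smul_inv_smul₀ (G.d_pos k).ne']
  rw [hroot, wordProd_smul, wordProd_corootToWeight, h, d_eq_of_dual_qword_single h, ← hroot]

lemma wordProd_mul_srefl_mul_inv_of_dual_qword_single :
    G.wordProd l * G.srefl i * (G.wordProd l)⁻¹ = G.srefl j := by
  ext μ : 1
  obtain ⟨ν, rfl⟩ := (G.wordProd l).surjective μ
  have hν : ν i = G.wordProd l ν j := by
    have := G.linearCombination_wordProd_qword l ν (single i 1)
    rw [h, linearCombination_single, linearCombination_single] at this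
    simpa using this.symm
  simp only [Equiv.Perm.mul_apply, Equiv.Perm.coe_inv, Equiv.symm_apply_apply]
  rw [srefl_eq, sub_eq_add_neg, ← neg_smul, wordProd_add, wordProd_smul,
    wordProd_simpleRoot_of_dual_qword_single h, hν, srefl_eq, neg_smul, ← sub_eq_add_neg]

end Conjugation

section Length

lemma length_wordProd_le (l : List I) : G.length (G.wordProd l) ≤ l.length :=
  Nat.sInf_le ⟨l, rfl, rfl⟩

lemma exists_isReduced (l : List I) : ∃ m, G.IsReduced m ∧ G.wordProd m = G.wordProd l := by
  obtain ⟨m, hm, hmw⟩ := Nat.sInf_mem (⟨l.length, l, rfl, rfl⟩ :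
    {n | ∃ m : List I, m.length = n ∧ G.wordProd m = G.wordProd l}.Nonempty)
  exact ⟨m, by rw [IsReduced, hmw, length, hm], hmw⟩

lemma length_mul_le (l m : List I) :
    G.length (G.wordProd l * G.wordProd m) ≤ G.length (G.wordProd l) + G.length (G.wordProd m) := by
  obtain ⟨l', hl', hl'w⟩ := G.exists_isReduced l
  obtain ⟨m', hm', hm'w⟩ := G.exists_isReduced m
  rw [← hl'w, ← hm'w, hl', hm', ← wordProd_append, ← List.length_append]
  exact G.length_wordProd_le _

lemma length_inv_le (l : List I) : G.length (G.wordProd l)⁻¹ ≤ G.length (G.wordProd l) := by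
  obtain ⟨m, hm, hmw⟩ := G.exists_isReduced l
  rw [← hmw, ← wordProd_reverse, hm, ← List.length_reverse]
  exact G.length_wordProd_le _

lemma length_inv (l : List I) : G.length (G.wordProd l)⁻¹ = G.length (G.wordProd l) := by
  refine le_antisymm (G.length_inv_le l) ?_
  simpa using G.length_inv_le l.reverse

lemma length_mul_srefl_le (l : List I) (t : I) :
    G.length (G.wordProd l * G.srefl t) ≤ G.length (G.wordProd l) + 1 := by
  obtain ⟨m, hm, hmw⟩ := G.exists_isReduced l
  rw [← hmw, hm, ← wordProd_singleton, ← wordProd_append]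
  simpa using G.length_wordProd_le (m ++ [t])

lemma length_le_length_mul_srefl (l : List I) (t : I) :
    G.length (G.wordProd l) ≤ G.length (G.wordProd l * G.srefl t) + 1 := by
  simpa [mul_assoc] using G.length_mul_srefl_le (l ++ [t]) t

variable {G} in
lemma IsReduced.of_append_left {l m : List I} (h : G.IsReduced (l ++ m)) : G.IsReduced l := by
  have h₁ := G.length_mul_le l m
  have h₂ := G.length_wordProd_le l
  have h₃ := G.length_wordProd_le m
  rw [← wordProd_append, h, List.length_append] at h₁
  exact le_antisymm h₂ (by omega)

variable {G} in
lemma IsReduced.of_append_right {l m : List I} (h : G.IsReduced (l ++ m)) : G.IsReduced m := by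
  have h₁ := G.length_mul_le l m
  have h₂ := G.length_wordProd_le l
  have h₃ := G.length_wordProd_le m
  rw [← wordProd_append, h, List.length_append] at h₁
  exact le_antisymm h₃ (by omega)

variable {G} in
lemma IsReduced.reverse {l : List I} (h : G.IsReduced l) : G.IsReduced l.reverse := by
  rw [IsReduced, wordProd_reverse, length_inv, h, List.length_reverse]

lemma wordProd_eq_one_of_length_eq_zero {l : List I} (h : G.length (G.wordProd l) = 0) :
    G.wordProd l = 1 := by
  obtain ⟨m, hm, hmw⟩ := G.exists_isReduced l
  rw [← hmw, List.eq_nil_of_length_eq_zero (hm.symm.trans (hmw ▸ h)), wordProd_nil]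

lemma exists_length_mul_srefl_lt {l : List I} (h : G.length (G.wordProd l) ≠ 0) :
    ∃ j, G.length (G.wordProd l * G.srefl j) < G.length (G.wordProd l) := by
  obtain ⟨m, hm, hmw⟩ := G.exists_isReduced l
  rcases m.eq_nil_or_concat with rfl | ⟨m', j, rfl⟩
  · exact absurd (hmw ▸ hm) h
  · refine ⟨j, ?_⟩
    have := G.length_wordProd_le m'
    rw [← hmw, hm, List.concat_eq_append, wordProd_append, wordProd_singleton, mul_assoc,
      srefl_mul_self, mul_one, List.length_append, List.length_singleton]
    omega

lemma length_mul_le_add_length (l m : List I) :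
    G.length (G.wordProd l * G.wordProd m) ≤ G.length (G.wordProd l) + m.length := by
  have := G.length_mul_le l m
  have := G.length_wordProd_le m
  omega

end Length

section RankTwo

lemma exists_wordProd_altWord_append_singleton {u v a : I} (ha : a = u ∨ a = v) (k : ℕ) :
    ∃ k' ≤ k + 1, G.wordProd (altWord u v k ++ [a]) = G.wordProd (altWord u v k') ∨
      G.wordProd (altWord u v k ++ [a]) = G.wordProd (altWord v u k') := by
  cases k with
  | zero =>
    rcases ha with rfl | rfl
    · exact ⟨1, le_rfl, Or.inl rfl⟩
    · exact ⟨1, le_rfl, Or.inr rfl⟩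
  | succ k =>
    rcases ha with rfl | rfl
    · refine ⟨k, by omega, Or.inr ?_⟩
      rw [altWord_succ_eq_append, wordProd_append, wordProd_append, wordProd_singleton, mul_assoc,
        srefl_mul_self, mul_one]
    · exact ⟨k + 2, le_rfl, Or.inr (by rw [altWord_succ_eq_append a u (k + 1)])⟩

lemma exists_wordProd_eq_altWord {i j : I} {m : List I} (hm : ∀ t ∈ m, t = i ∨ t = j) :
    ∃ k ≤ m.length, G.wordProd m = G.wordProd (altWord i j k) ∨
      G.wordProd m = G.wordProd (altWord j i k) := by
  induction m using List.reverseRecOn with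
  | nil => exact ⟨0, le_rfl, Or.inl rfl⟩
  | append_singleton m a ih =>
    simp only [List.mem_append, List.mem_singleton] at hm
    obtain ⟨k, hk, h⟩ := ih fun t ht => hm t (Or.inl ht)
    have ha := hm a (Or.inr rfl)
    rcases h with h | h
    · obtain ⟨k', hk', h'⟩ := G.exists_wordProd_altWord_append_singleton ha k
      refine ⟨k', by simp only [List.length_append, List.length_singleton]; omega, ?_⟩
      rwa [wordProd_append, h, ← wordProd_append]
    · obtain ⟨k', hk', h'⟩ := G.exists_wordProd_altWord_append_singleton ha.symm k
      refine ⟨k', by simp only [List.length_append, List.length_singleton]; omega, ?_⟩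
      rw [wordProd_append, h, ← wordProd_append]
      exact h'.symm

lemma dual_qrefl_single_add_single_left (i j : I) (p q : ℤ) :
    G.dual.qrefl i (single i p + single j q) = single i (-p - G.a j i * q) + single j q := by
  rw [qrefl_apply, map_add, linearCombination_single, linearCombination_single, add_sub_right_comm,
    ← single_sub]
  simp only [dual_a, G.a_diag, smul_eq_mul]
  congr 2
  ring

lemma dual_qrefl_single_add_single_right (i j : I) (p q : ℤ) :
    G.dual.qrefl j (single i p + single j q) = single i p + single j (-q - G.a i j * p) := by
  rw [qrefl_apply, map_add, linearCombination_single, linearCombination_single, add_sub_assoc,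
    ← single_sub]
  simp only [dual_a, G.a_diag, smul_eq_mul]
  congr 2
  ring

lemma dual_qword_altWord_single (i j : I) (k : ℕ) :
    G.dual.qword (altWord j i k) (single i 1) = single i (dihedralCoeff (G.a i j) (G.a j i) k).1
      + single j (dihedralCoeff (G.a i j) (G.a j i) k).2 := by
  induction k with
  | zero => simp [altWord, dihedralCoeff]
  | succ k ih =>
    rw [altWord, qword_cons, Equiv.Perm.mul_apply, ih, dihedralCoeff]
    split_ifs
    · exact G.dual_qrefl_single_add_single_right i j _ _
    · exact G.dual_qrefl_single_add_single_left i j _ _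

lemma wordProd_altWord_eq_of_dihedralCoeff {i j : I} {M : ℕ} (hM : 0 < M)
    (h : dihedralCoeff (G.a i j) (G.a j i) (M - 1) = if Even (M - 1) then (0, 1) else (1, 0)) :
    G.wordProd (altWord i j M) = G.wordProd (altWord j i M) := by
  obtain ⟨N, rfl⟩ := Nat.exists_eq_add_of_lt hM
  have hroot : G.dual.qword (altWord j i N) (single i 1)
      = single (if Even N then j else i) 1 := by
    rw [dual_qword_altWord_single]
    simp only [zero_add, Nat.add_sub_cancel] at h
    split_ifs at h ⊢ <;> simp [h]
  have hconj := wordProd_mul_srefl_mul_inv_of_dual_qword_single hroot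
  rw [zero_add, altWord_succ_eq_append, altWord, wordProd_append, wordProd_singleton, wordProd_cons,
    ← hconj, inv_mul_cancel_right]

lemma exists_shorter_of_dihedralCoeff {i j : I} {M k : ℕ} (hM : 0 < M)
    (h : dihedralCoeff (G.a i j) (G.a j i) (M - 1) = if Even (M - 1) then (0, 1) else (1, 0))
    (hMk : M ≤ k) :
    ∃ m : List I, m.length < k ∧ G.wordProd m = G.wordProd (altWord j i k) * G.srefl i := by
  obtain ⟨pre, hpre⟩ := altWord_isSuffix j i hMk
  obtain ⟨N, rfl⟩ := Nat.exists_eq_add_of_lt hM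
  refine ⟨pre ++ altWord j i N, ?_, ?_⟩
  · have := congrArg List.length hpre
    simp only [List.length_append, length_altWord] at this ⊢
    omega
  · rw [← hpre, wordProd_append, wordProd_append, ← G.wordProd_altWord_eq_of_dihedralCoeff hM h,
      zero_add, altWord_succ_eq_append, wordProd_append, wordProd_singleton, mul_assoc, mul_assoc,
      srefl_mul_self, mul_one]

theorem dihedral_dichotomy {i j : I} (hij : i ≠ j) {m : List I} (hm : ∀ t ∈ m, t = i ∨ t = j) :
    (∃ p q : ℤ, 0 ≤ p ∧ 0 ≤ q ∧ G.dual.qword m (single i 1) = single i p + single j q) ∨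
      ∃ m' : List I, m'.length < m.length ∧ G.wordProd m' = G.wordProd m * G.srefl i := by
  set f := dihedralCoeff (G.a i j) (G.a j i)
  obtain ⟨k, hk, h | h⟩ := G.exists_wordProd_eq_altWord hm
  · rcases k with _ | k
    · left
      refine ⟨1, 0, zero_le_one, le_rfl, ?_⟩
      rw [G.dual_qword_eq_of_wordProd_eq h]
      simp [altWord]
    · right
      refine ⟨altWord j i k, by rw [length_altWord]; omega, ?_⟩
      rw [h, altWord_succ_eq_append, wordProd_append, wordProd_singleton, mul_assoc,
        srefl_mul_self, mul_one]
  have hcoeff : G.dual.qword m (single i 1) = single i (f k).1 + single j (f k).2 := by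
    rw [G.dual_qword_eq_of_wordProd_eq h, dual_qword_altWord_single]
  have hb := G.a_offdiag i j hij
  have hc := G.a_offdiag j i (Ne.symm hij)
  rcases le_or_gt 4 (G.a i j * G.a j i) with h4 | h4
  · exact Or.inl ⟨_, _, (dihedralCoeff_nonneg_of_four_le hb hc h4 k).1,
      (dihedralCoeff_nonneg_of_four_le hb hc h4 k).2, hcoeff⟩
  obtain ⟨M, hM, hpos, hbraid⟩ := exists_dihedralCoeff_braid hb hc
    ⟨G.a_zero_iff i j, G.a_zero_iff j i⟩ h4
  rcases lt_or_ge k M with hkM | hMk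
  · exact Or.inl ⟨_, _, (hpos k hkM).1, (hpos k hkM).2, hcoeff⟩
  exact Or.inr ((G.exists_shorter_of_dihedralCoeff hM hbraid hMk).imp fun _ h' =>
    ⟨h'.1.trans_le hk, h ▸ h'.2⟩)

end RankTwo

section Positivity

lemma exists_rankTwo_factorization {l : List I} (t : I) {j : I}
    (hj : G.length (G.wordProd l * G.srefl j) < G.length (G.wordProd l)) :
    ∃ v d : List I, (∀ u ∈ d, u = t ∨ u = j) ∧ G.wordProd l = G.wordProd v * G.wordProd d ∧
      G.length (G.wordProd l) = G.length (G.wordProd v) + d.length ∧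
      G.length (G.wordProd v) < G.length (G.wordProd l) ∧
      G.length (G.wordProd v) ≤ G.length (G.wordProd v * G.srefl t) ∧
      G.length (G.wordProd v) ≤ G.length (G.wordProd v * G.srefl j) := by
  classical
  let P (r : ℕ) : Prop := ∃ v d : List I, (∀ u ∈ d, u = t ∨ u = j) ∧
    G.wordProd l = G.wordProd v * G.wordProd d ∧
    G.length (G.wordProd l) = G.length (G.wordProd v) + d.length ∧ G.length (G.wordProd v) = r
  have hP : P (G.length (G.wordProd l * G.srefl j)) := by
    refine ⟨l ++ [j], [j], by simp, by simp [mul_assoc], ?_, by simp⟩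
    have := G.length_le_length_mul_srefl l j
    simp only [wordProd_append, wordProd_singleton, List.length_singleton]
    omega
  obtain ⟨v, d, hd, hvd, hlen, hv⟩ := Nat.find_spec ⟨_, hP⟩
  have hmin (u : I) (hu : u = t ∨ u = j) :
      G.length (G.wordProd v) ≤ G.length (G.wordProd v * G.srefl u) := by
    by_contra! hlt
    refine Nat.find_min ⟨_, hP⟩ (hv ▸ hlt) ⟨v ++ [u], u :: d, ?_, ?_, ?_, by simp⟩
    · simpa [hu] using hd
    · simp [hvd, mul_assoc]
    · have h₁ := G.length_mul_le_add_length (v ++ [u]) (u :: d)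
      have h₂ := G.length_le_length_mul_srefl v u
      simp only [wordProd_append, wordProd_cons, wordProd_nil, mul_one, List.length_cons,
        mul_assoc, srefl_mul_srefl_mul, ← hvd] at h₁ ⊢
      omega
  refine ⟨v, d, hd, hvd, hlen, ?_, hmin t (Or.inl rfl), hmin j (Or.inr rfl)⟩
  have := Nat.find_min' ⟨_, hP⟩ hP
  omega

theorem dual_qword_single_nonneg {l : List I} {t : I}
    (h : G.length (G.wordProd l) ≤ G.length (G.wordProd l * G.srefl t)) :
    0 ≤ G.dual.qword l (single t 1) := by
  obtain ⟨n, hn⟩ : ∃ n, G.length (G.wordProd l) = n := ⟨_, rfl⟩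
  induction n using Nat.strong_induction_on generalizing l t with
  | _ n ih =>
  rcases eq_or_ne n 0 with rfl | hn0
  · rw [G.dual_qword_eq_of_wordProd_eq (m := []) (G.wordProd_eq_one_of_length_eq_zero hn)]
    exact single_nonneg.mpr zero_le_one
  obtain ⟨j, hj⟩ := G.exists_length_mul_srefl_lt (hn ▸ hn0)
  have htj : t ≠ j := by
    rintro rfl
    omega
  -- Tits: `v` has no descent at `t` or `j`, so induction applies to it, and `d` lies in the
  -- rank-two subgroup `⟨s_t, s_j⟩`.
  obtain ⟨v, d, hd, hvd, hlen, hlt, hvt, hvj⟩ := G.exists_rankTwo_factorization t hj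
  rcases G.dihedral_dichotomy htj hd with ⟨p, q, hp, hq, hpq⟩ | ⟨m, hm, hmd⟩
  · rw [G.dual_qword_eq_of_wordProd_eq (m := v ++ d) (by rw [wordProd_append, hvd]), qword_append,
      Equiv.Perm.mul_apply, hpq, qword_add, ← smul_single_one t p, ← smul_single_one j q,
      qword_zsmul, qword_zsmul]
    exact add_nonneg (zsmul_nonneg (ih _ (hn ▸ hlt) hvt rfl) hp)
      (zsmul_nonneg (ih _ (hn ▸ hlt) hvj rfl) hq)
  · have := G.length_mul_le_add_length v m
    rw [hmd, ← mul_assoc, ← hvd] at this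
    omega

theorem dual_qword_single_nonpos {l : List I} {t : I}
    (h : G.length (G.wordProd l * G.srefl t) ≤ G.length (G.wordProd l)) :
    G.dual.qword l (single t 1) ≤ 0 := by
  have := G.dual_qword_single_nonneg (l := l ++ [t]) (t := t) (by simpa [mul_assoc] using h)
  rwa [qword_append, Equiv.Perm.mul_apply, qword_cons, qword_nil, mul_one, qrefl_single_self,
    qword_neg, neg_nonneg] at this

lemma length_mul_srefl_ne (l : List I) (t : I) :
    G.length (G.wordProd l * G.srefl t) ≠ G.length (G.wordProd l) := fun h =>
  G.dual.qword_single_ne_zero l t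
    (le_antisymm (G.dual_qword_single_nonpos h.le) (G.dual_qword_single_nonneg h.ge))

lemma length_mul_srefl_eq_or (l : List I) (t : I) :
    G.length (G.wordProd l * G.srefl t) = G.length (G.wordProd l) + 1 ∨
      G.length (G.wordProd l * G.srefl t) + 1 = G.length (G.wordProd l) := by
  have := G.length_mul_srefl_ne l t
  have := G.length_mul_srefl_le l t
  have := G.length_le_length_mul_srefl l t
  omega

variable {G} in
lemma IsReduced.append_singleton_iff {l : List I} (hl : G.IsReduced l) (t : I) :
    G.IsReduced (l ++ [t]) ↔ G.length (G.wordProd l) < G.length (G.wordProd l * G.srefl t) := by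
  rw [IsReduced, wordProd_append, wordProd_singleton, List.length_append, List.length_singleton,
    ← hl]
  rcases G.length_mul_srefl_eq_or l t with h | h <;> omega

lemma dual_qword_single_nonneg_or_nonpos (l : List I) (t : I) :
    0 ≤ G.dual.qword l (single t 1) ∨ G.dual.qword l (single t 1) ≤ 0 :=
  (le_total _ _).imp G.dual_qword_single_nonneg G.dual_qword_single_nonpos

end Positivity

section Exchange

lemma exists_dual_qword_single_eq_single {a b : List I} {t : I}
    (hb : 0 ≤ G.dual.qword b (single t 1)) (hab : G.dual.qword (a ++ b) (single t 1) ≤ 0) :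
    ∃ r, ∃ hr : r < a.length, G.dual.qword (a.drop (r + 1) ++ b) (single t 1) = single a[r] 1 := by
  induction a with
  | nil => exact absurd (le_antisymm hab hb) (G.dual.qword_single_ne_zero b t)
  | cons x a ih =>
    rw [List.cons_append, qword_cons, Equiv.Perm.mul_apply] at hab
    rcases G.dual_qword_single_nonneg_or_nonpos (a ++ b) t with hpos | hneg
    · have hx := eq_single_of_nonneg_of_qrefl_nonpos _ hpos hab
      have h₁ := eq_one_of_qword_single_eq_single _ (le_def.mp hpos x) hx
      rw [h₁] at hx
      exact ⟨0, by simp, by simpa using hx⟩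
    · obtain ⟨r, hr, h⟩ := ih hneg
      exact ⟨r + 1, by simp [hr], by simpa using h⟩

lemma exists_conj_srefl_eq {a b : List I} {t : I}
    (hb : 0 ≤ G.dual.qword b (single t 1)) (hab : G.dual.qword (a ++ b) (single t 1) ≤ 0) :
    ∃ r, ∃ hr : r < a.length, G.wordProd b * G.srefl t * (G.wordProd b)⁻¹
      = (G.wordProd (a.drop (r + 1)))⁻¹ * G.srefl a[r] * G.wordProd (a.drop (r + 1)) := by
  obtain ⟨r, hr, h⟩ := G.exists_dual_qword_single_eq_single hb hab
  refine ⟨r, hr, ?_⟩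
  rw [← wordProd_mul_srefl_mul_inv_of_dual_qword_single h, wordProd_append]
  group

lemma wordProd_mul_conj_srefl_eq_eraseIdx (a : List I) {r : ℕ} (hr : r < a.length) :
    G.wordProd a * ((G.wordProd (a.drop (r + 1)))⁻¹ * G.srefl a[r] * G.wordProd (a.drop (r + 1)))
      = G.wordProd (a.eraseIdx r) := by
  have ha : G.wordProd a = G.wordProd (a.take r) * G.srefl a[r] * G.wordProd (a.drop (r + 1)) := by
    conv_lhs => rw [← List.take_append_drop r a, List.drop_eq_getElem_cons hr]
    rw [wordProd_append, wordProd_cons, mul_assoc]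
  rw [ha, List.eraseIdx_eq_take_drop_succ, wordProd_append]
  simp only [mul_assoc, mul_inv_cancel_left, srefl_mul_srefl_mul]

theorem exists_wordProd_mul_srefl_eq_eraseIdx {a : List I} {t : I}
    (h : G.length (G.wordProd a * G.srefl t) ≤ G.length (G.wordProd a)) :
    ∃ r < a.length, G.wordProd a * G.srefl t = G.wordProd (a.eraseIdx r) := by
  obtain ⟨r, hr, hconj⟩ := G.exists_conj_srefl_eq (a := a) (b := [])
    (by simp) (by simpa using G.dual_qword_single_nonpos h)
  refine ⟨r, hr, ?_⟩
  rw [← G.wordProd_mul_conj_srefl_eq_eraseIdx a hr, ← hconj]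
  simp

theorem exists_sublist_of_not_isReduced {m : List I} (h : ¬ G.IsReduced m) :
    ∃ m', m'.Sublist m ∧ m'.length < m.length ∧ G.wordProd m' = G.wordProd m := by
  induction m using List.reverseRecOn with
  | nil => exact absurd (by simp [IsReduced, length]) h
  | append_singleton m a ih =>
    by_cases hm : G.IsReduced m
    · have hle := not_lt.mp (mt (hm.append_singleton_iff a).mpr h)
      obtain ⟨r, hr, hra⟩ := G.exists_wordProd_mul_srefl_eq_eraseIdx hle
      refine ⟨m.eraseIdx r, (List.eraseIdx_sublist m r).trans (List.sublist_append_left m [a]), ?_,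
        by rw [wordProd_append, wordProd_singleton, hra]⟩
      rw [List.length_eraseIdx_of_lt hr, List.length_append, List.length_singleton]
      omega
    · obtain ⟨m', hm', hlen, hw⟩ := ih hm
      exact ⟨m' ++ [a], hm'.append_right [a], by simpa using hlen,
        by rw [wordProd_append, wordProd_append, hw]⟩

theorem exists_isReduced_of_forall_mem {P : I → Prop} {l : List I} (hl : ∀ t ∈ l, P t) :
    ∃ m, G.IsReduced m ∧ (∀ t ∈ m, P t) ∧ G.wordProd m = G.wordProd l := by
  induction hn : l.length using Nat.strong_induction_on generalizing l with
  | _ n ih =>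
  by_cases hred : G.IsReduced l
  · exact ⟨l, hred, hl, rfl⟩
  obtain ⟨m, hm, hlen, hw⟩ := G.exists_sublist_of_not_isReduced hred
  obtain ⟨m', hred', hm', hw'⟩ := ih _ (hn ▸ hlen) (fun t ht => hl t (hm.subset ht)) rfl
  exact ⟨m', hred', hm', hw'.trans hw⟩

theorem exists_isReduced_of_mem_closure {P : I → Prop} {w : Equiv.Perm (I → ℝ)}
    (hw : w ∈ Subgroup.closure {p | ∃ α, P α ∧ p = G.srefl α}) :
    ∃ l, G.IsReduced l ∧ (∀ t ∈ l, P t) ∧ G.wordProd l = w := by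
  suffices ∃ l : List I, (∀ t ∈ l, P t) ∧ G.wordProd l = w by
    obtain ⟨l, hl, rfl⟩ := this
    exact G.exists_isReduced_of_forall_mem hl
  induction hw using Subgroup.closure_induction with
  | mem _ hp =>
    obtain ⟨α, hα, rfl⟩ := hp
    exact ⟨[α], by simpa using hα, wordProd_singleton G α⟩
  | one => exact ⟨[], by simp, rfl⟩
  | mul _ _ _ _ hu hv =>
    obtain ⟨lu, hlu, rfl⟩ := hu
    obtain ⟨lv, hlv, rfl⟩ := hv
    exact ⟨lu ++ lv, fun t ht => (List.mem_append.mp ht).elim (hlu t) (hlv t),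
      wordProd_append G lu lv⟩
  | inv _ _ hu =>
    obtain ⟨lu, hlu, rfl⟩ := hu
    exact ⟨lu.reverse, fun t ht => hlu t (List.mem_reverse.mp ht), wordProd_reverse G lu⟩

end Exchange

section MinimalCosetRepresentatives

lemma conj_srefl_mem_closure {P : I → Prop} {a : List I} (ha : ∀ t ∈ a, P t) {r : ℕ}
    (hr : r < a.length) :
    (G.wordProd (a.drop (r + 1)))⁻¹ * G.srefl a[r] * G.wordProd (a.drop (r + 1))
      ∈ Subgroup.closure {q | ∃ α, P α ∧ q = G.srefl α} := by
  have hdrop : G.wordProd (a.drop (r + 1)) ∈ Subgroup.closure {q | ∃ α, P α ∧ q = G.srefl α} :=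
    G.wordProd_mem_closure fun t ht => ⟨t, ha t ((List.drop_sublist _ _).subset ht), rfl⟩
  exact mul_mem (mul_mem (inv_mem hdrop)
    (Subgroup.subset_closure ⟨_, ha _ (List.getElem_mem hr), rfl⟩)) hdrop

lemma linearCombination_nonneg_of_dual_qword_nonpos {μ : I → ℝ} {l : List I} {c : I →₀ ℤ}
    (hl : ∀ t ∈ l, 0 ≤ μ t) (hc : 0 ≤ c) (hlc : G.dual.qword l c ≤ 0) :
    0 ≤ linearCombination ℤ μ c := by
  refine linearCombination_nonneg hc fun s hs => ?_
  by_contra! hμs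
  have hsl : s ∉ l := fun h => (hl s h).not_gt hμs
  have := le_def.mp hlc s
  rw [qword_apply_of_notMem _ hsl] at this
  exact hs (le_antisymm this (le_def.mp hc s))

lemma linearCombination_wordProd_dual_qword_nonpos {Λ : I → ℝ} (hΛ : ∀ i, 0 ≤ Λ i)
    {p s : List I} {j : I} (hred : G.IsReduced (p ++ j :: s)) :
    linearCombination ℤ (G.wordProd (p ++ j :: s) Λ) (G.dual.qword p (single j 1)) ≤ 0 := by
  have hsj : G.IsReduced (s.reverse ++ [j]) := by simpa using hred.of_append_right.reverse
  have hpos := G.dual_qword_single_nonneg ((hsj.of_append_left.append_singleton_iff j).mp hsj).le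
  have hqword : G.dual.qword (p ++ j :: s) (G.dual.qword s.reverse (-single j 1))
      = G.dual.qword p (single j 1) := by
    rw [← qrefl_single_self G.dual, qword_append, qword_cons, qword_reverse]
    simp
  rw [← hqword, linearCombination_wordProd_qword, qword_neg, map_neg, neg_nonpos]
  exact linearCombination_nonneg hpos fun i _ => hΛ i

lemma conj_srefl_apply_eq_self {μ : I → ℝ} {l : List I} {j : I}
    (h : linearCombination ℤ μ (G.dual.qword l (single j 1)) = 0) :
    (G.wordProd l * G.srefl j * (G.wordProd l)⁻¹) μ = μ := by
  obtain ⟨ν, rfl⟩ := (G.wordProd l).surjective μ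
  have hνj : ν j = 0 := by
    rw [linearCombination_wordProd_qword, linearCombination_single, one_smul] at h
    exact h
  have hfix : G.srefl j ν = ν := by
    ext k
    simp [hνj]
  simp [hfix]

lemma isReduced_append_append_singleton {Λ : I → ℝ} (hΛ : ∀ i, 0 ≤ Λ i)
    {lx lw p s : List I} {j : I} (hsplit : p ++ j :: s = lx) (hx : G.IsReduced lx)
    (hS : ∀ t ∈ lw, 0 ≤ G.wordProd lx Λ t)
    (hmin : ∀ q ∈ Subgroup.closure {q | ∃ α, 0 ≤ G.wordProd lx Λ α ∧ q = G.srefl α},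
      q (G.wordProd lx Λ) = G.wordProd lx Λ →
        G.length (G.wordProd lw) ≤ G.length (G.wordProd lw * q))
    (hw : G.IsReduced (lw ++ p)) : G.IsReduced (lw ++ p ++ [j]) := by
  subst hsplit
  by_contra hred
  have hpj : G.IsReduced (p ++ [j]) := IsReduced.of_append_left (l := p ++ [j]) (m := s)
    (by simpa using hx)
  have hγ := G.dual_qword_single_nonneg ((hpj.of_append_left.append_singleton_iff j).mp hpj).le
  have hwγ := G.dual_qword_single_nonpos (not_lt.mp (mt (hw.append_singleton_iff j).mpr hred))
  obtain ⟨r, hr, hconj⟩ := G.exists_conj_srefl_eq hγ hwγ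
  have hq_mem := hconj ▸ G.conj_srefl_mem_closure hS hr
  have hq_fix := G.conj_srefl_apply_eq_self (le_antisymm
    (G.linearCombination_wordProd_dual_qword_nonpos hΛ hx)
    (G.linearCombination_nonneg_of_dual_qword_nonpos hS hγ (by rwa [qword_append] at hwγ)))
  have hshorter : G.length (G.wordProd lw * (G.wordProd p * G.srefl j * (G.wordProd p)⁻¹))
      < G.length (G.wordProd lw) := by
    have hlw : G.IsReduced lw := hw.of_append_left
    rw [hconj, G.wordProd_mul_conj_srefl_eq_eraseIdx lw hr, hlw]
    exact (G.length_wordProd_le _).trans_lt (by rw [List.length_eraseIdx_of_lt hr]; omega)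
  exact (hmin _ hq_mem hq_fix).not_gt hshorter

theorem isReduced_append_of_minimal {Λ : I → ℝ} (hΛ : ∀ i, 0 ≤ Λ i) {lx lw : List I}
    (hx : G.IsReduced lx) (hw : G.IsReduced lw) (hS : ∀ t ∈ lw, 0 ≤ G.wordProd lx Λ t)
    (hmin : ∀ q ∈ Subgroup.closure {q | ∃ α, 0 ≤ G.wordProd lx Λ α ∧ q = G.srefl α},
      q (G.wordProd lx Λ) = G.wordProd lx Λ →
        G.length (G.wordProd lw) ≤ G.length (G.wordProd lw * q)) :
    G.IsReduced (lw ++ lx) := by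
  suffices ∀ k ≤ lx.length, G.IsReduced (lw ++ lx.take k) by simpa using this _ le_rfl
  intro k hk
  induction k with
  | zero => simpa using hw
  | succ k ih =>
    rw [List.take_succ_eq_append_getElem (by omega), ← List.append_assoc]
    exact G.isReduced_append_append_singleton hΛ
      (by rw [List.getElem_cons_drop, List.take_append_drop]) hx hS hmin (ih (by omega))

end MinimalCosetRepresentatives

end SGCM

end KM

/-- Let `Λ` be dominant, `x` a `Λ`-(co)minuscule element,
`S(x) = {α : ⟨x(Λ), α^∨⟩ ≥ 0}`, `W_x` the subgroup generated by `{s_α : α ∈ S(x)}`, and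
let `w ∈ W_x` be of minimal length in its coset modulo the stabilizer of `x(Λ)` in
`W_x`. Then lengths are additive: `ℓ(w x) = ℓ(w) + ℓ(x)`. -/
theorem statement7 {I : Type} (G : KM.SGCM I) (Λ : I → ℝ) (hdom : ∀ i, 0 ≤ Λ i)
    (x : Equiv.Perm (I → ℝ)) (hx : G.IsCoMin Λ x)
    (w : Equiv.Perm (I → ℝ))
    (hwWx : w ∈ Subgroup.closure
      {p : Equiv.Perm (I → ℝ) | ∃ α, 0 ≤ x Λ α ∧ p = G.srefl α})
    (hmin : ∀ q ∈ Subgroup.closure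
        {p : Equiv.Perm (I → ℝ) | ∃ α, 0 ≤ x Λ α ∧ p = G.srefl α},
      q (x Λ) = x Λ → G.length w ≤ G.length (w * q)) :
    G.length (w * x) = G.length w + G.length x := by
  obtain ⟨lx, hlx, rfl⟩ : ∃ lx, G.IsReduced lx ∧ G.wordProd lx = x := by
    rcases hx with ⟨l, hl, hlx, -⟩ | ⟨l, hl, hlx, -⟩ <;> exact ⟨l, hl, hlx⟩
  obtain ⟨lw, hlw, hS, rfl⟩ := G.exists_isReduced_of_mem_closure hwWx
  have hred := G.isReduced_append_of_minimal hdom hlx hlw hS hmin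
  rw [← KM.SGCM.wordProd_append, hred, hlw, hlx, List.length_append]
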